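/- Let λ ∈ Γ_k^+ with S_k(λ)/S_l(λ) = C(n,k)/C(n,l) for 0 ≤ l < k ≤ n. Then S_{k+1}(λ)/S_k(λ) ≤ (n−k)/(k+1) and S_{l−1}(λ)/S_l(λ) ≤ l/(n−l+1). -/

import Mathlib

/-!
Newton's inequalities say that the normalized means `E_j = S_j / C(n, j)` form a log-concave
sequence. They come from Rolle's theorem: differentiating a real-rooted polynomial, and
reversing its coefficients, keep it real-rooted and only shift the sequence of normalized
coefficients, so every triple `E_j, E_{j+1}, E_{j+2}` is that of a real-rooted quadratic, whose
discriminant is nonnegative. On `Γ_k^+` the `E_j` with `j ≤ k` are positive, and a positive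
log-concave sequence with `E_l = E_k` increases at `l` and decreases at `k`. One more Newton
inequality at each end gives `E_{k+1} ≤ E_k` and `E_{l-1} ≤ E_l`, which are the two claims.
-/

/-- `S_k(λ)`: the `k`-th elementary symmetric polynomial of `λ ∈ ℝ^n` (with `S_0 = 1`). -/
def Sv {n : ℕ} (k : ℕ) (lam : Fin n → ℝ) : ℝ :=
  ∑ s ∈ Finset.univ.powersetCard k, ∏ i ∈ s, lam i

open Polynomial

namespace Polynomial

theorem Splits.reverse {K : Type*} [Field K] {p : K[X]} (hp : p.Splits) : p.reverse.Splits := by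
  induction hp using Submonoid.closure_induction with
  | mem q hq =>
    refine Splits.of_natDegree_le_one ((reverse_natDegree_le q).trans ?_)
    rcases hq with ⟨a, rfl⟩ | ⟨a, rfl⟩ <;> simp
  | one => rw [← C_1, reverse_C]; exact Splits.C 1
  | mul f g _ _ hf hg => rw [reverse_mul_of_domain]; exact hf.mul hg

theorem Splits.reflect {K : Type*} [Field K] {p : K[X]} (hp : p.Splits) {N : ℕ}
    (hN : p.natDegree ≤ N) : (p.reflect N).Splits := by
  have h : p.reflect N = p.reverse * X ^ (N - p.natDegree) := by
    rw [← reflect_one, Polynomial.reverse,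
      ← reflect_mul p 1 le_rfl (natDegree_one.trans_le (Nat.zero_le _)), mul_one,
      Nat.add_sub_cancel' hN]
  rw [h]
  exact hp.reverse.mul (Splits.X_pow _)

theorem Splits.derivative {p : ℝ[X]} (hp : p.Splits) : (Polynomial.derivative p).Splits := by
  rw [splits_iff_card_roots] at hp ⊢
  have h₁ := p.card_roots_le_derivative
  have h₂ := natDegree_derivative_le p
  have h₃ := (Polynomial.derivative p).card_roots'
  omega

theorem Splits.four_mul_coeff_two_mul_coeff_zero_le {K : Type*} [Field K] [LinearOrder K]
    [IsStrictOrderedRing K] {p : K[X]} (hp : p.Splits) (hdeg : p.natDegree ≤ 2) :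
    4 * p.coeff 2 * p.coeff 0 ≤ p.coeff 1 ^ 2 := by
  rcases eq_or_ne (p.coeff 2) 0 with h2 | h2
  · simp [h2, sq_nonneg]
  have hdeg2 : p.natDegree = 2 := le_antisymm hdeg (le_natDegree_of_ne_zero h2)
  obtain ⟨x, hx⟩ := hp.exists_eval_eq_zero
    (by rw [degree_eq_natDegree (by rintro rfl; simp at h2), hdeg2]; decide)
  rw [eval_eq_sum_range' (n := 3) (by omega)] at hx
  simp only [Finset.sum_range_succ, Finset.sum_range_zero] at hx
  have hdiscrim := discrim_eq_sq_of_quadratic_eq_zero (a := p.coeff 2) (b := p.coeff 1)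
    (c := p.coeff 0) (x := x) (by linear_combination hx)
  have h := sq_nonneg (2 * p.coeff 2 * x + p.coeff 1)
  rw [← hdiscrim, discrim] at h
  linarith

/-- For `p = ∏ᵢ (X + λᵢ)` of degree `n`, `normalizedCoeff p n j = E_{n-j}(λ)`. -/
noncomputable def normalizedCoeff {K : Type*} [Field K] (p : K[X]) (n j : ℕ) : K :=
  p.coeff j / n.choose j

section normalizedCoeff

variable {K : Type*} [Field K]

theorem normalizedCoeff_derivative [CharZero K] (p : K[X]) (n j : ℕ) :
    normalizedCoeff (derivative p) n j = (n + 1) * normalizedCoeff p (n + 1) (j + 1) := by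
  have hchoose : ((n + 1 : ℕ) : K) * n.choose j = (n + 1).choose (j + 1) * (j + 1 : ℕ) := by
    exact_mod_cast Nat.add_one_mul_choose_eq n j
  rcases le_or_gt j n with hj | hj
  · have h₁ : (n.choose j : K) ≠ 0 := by exact_mod_cast (Nat.choose_pos hj).ne'
    have h₂ : ((n + 1).choose (j + 1) : K) ≠ 0 := by
      exact_mod_cast (Nat.choose_pos (by omega)).ne'
    simp only [normalizedCoeff, coeff_derivative]
    field_simp
    push_cast at hchoose
    linear_combination -p.coeff (j + 1) * hchoose
  · simp [normalizedCoeff, Nat.choose_eq_zero_of_lt hj,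
      Nat.choose_eq_zero_of_lt (by omega : n + 1 < j + 1)]

theorem normalizedCoeff_reflect (p : K[X]) {n j : ℕ} (hj : j ≤ n) :
    normalizedCoeff (reflect n p) n j = normalizedCoeff p n (n - j) := by
  rw [normalizedCoeff, normalizedCoeff, coeff_reflect, revAt_le hj, Nat.choose_symm hj]

end normalizedCoeff

theorem Splits.normalizedCoeff_mul_le_sq {p : ℝ[X]} (hp : p.Splits) {n : ℕ}
    (hdeg : p.natDegree ≤ n) {j : ℕ} (hj : j + 2 ≤ n) :
    normalizedCoeff p n j * normalizedCoeff p n (j + 2) ≤ normalizedCoeff p n (j + 1) ^ 2 := by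
  induction n generalizing p j with
  | zero => omega
  | succ n ih =>
    have hn : (0 : ℝ) < ((n : ℝ) + 1) ^ 2 := by positivity
    obtain _ | j := j
    · obtain rfl | hn2 : n = 1 ∨ 2 ≤ n := by omega
      · have := hp.four_mul_coeff_two_mul_coeff_zero_le hdeg
        norm_num [normalizedCoeff, Nat.choose_one_right]
        linear_combination this / 4
      · -- reversing the coefficients and differentiating brings `a₀ a₂ ≤ a₁²` to degree `n`
        have hr : (Polynomial.reflect (n + 1) p).natDegree ≤ n + 1 :=
          natDegree_reflect_le.trans (max_le le_rfl hdeg)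
        have hq : (Polynomial.derivative (Polynomial.reflect (n + 1) p)).natDegree ≤ n :=
          (natDegree_derivative_le _).trans (by omega)
        have h := ih (hp.reflect hdeg).derivative hq (j := n - 2) (by omega)
        rw [normalizedCoeff_derivative, normalizedCoeff_derivative, normalizedCoeff_derivative,
          normalizedCoeff_reflect _ (by omega), normalizedCoeff_reflect _ (by omega),
          normalizedCoeff_reflect _ (by omega), show n + 1 - (n - 2 + 1) = 2 by omega,
          show n + 1 - (n - 2 + 1 + 1) = 1 by omega,
          show n + 1 - (n - 2 + 2 + 1) = 0 by omega] at h
        simp only [zero_add]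
        exact le_of_mul_le_mul_left (by linear_combination h) hn
    · have hq : (Polynomial.derivative p).natDegree ≤ n :=
        (natDegree_derivative_le p).trans (by omega)
      have h := ih hp.derivative hq (j := j) (by omega)
      rw [normalizedCoeff_derivative, normalizedCoeff_derivative, normalizedCoeff_derivative] at h
      exact le_of_mul_le_mul_left (by linear_combination h) hn

end Polynomial

theorem concave_seq_endpoints_le {q : ℕ → ℝ} {N : ℕ} (hN : 0 < N)
    (hconc : ∀ m, m + 2 ≤ N → q m + q (m + 2) ≤ 2 * q (m + 1)) (heq : q 0 = q N) :
    q N ≤ q (N - 1) ∧ q 0 ≤ q 1 := by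
  set d : ℕ → ℝ := fun m => q (m + 1) - q m with hd
  have hanti : ∀ i j, i ≤ j → j < N → d j ≤ d i := by
    intro i j hij hj
    induction j, hij using Nat.le_induction with
    | base => exact le_rfl
    | succ j _ ih =>
      have := hconc j (by omega)
      simp only [hd] at ih ⊢
      linarith [ih (by omega)]
  have hsum : ∑ i ∈ Finset.range N, d i = 0 := by
    rw [Finset.sum_range_sub, heq, sub_self]
  have hlast := Finset.card_nsmul_le_sum (Finset.range N) d (d (N - 1))
    fun i hi => hanti i (N - 1) (by simp at hi; omega) (by omega)
  have hfirst := Finset.sum_le_card_nsmul (Finset.range N) d (d 0)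
    fun i hi => hanti 0 i (Nat.zero_le i) (by simpa using hi)
  rw [hsum, Finset.card_range, nsmul_eq_mul] at hlast hfirst
  have hN' : (0 : ℝ) < N := by exact_mod_cast hN
  constructor
  · have : d (N - 1) ≤ 0 := nonpos_of_mul_nonpos_right hlast hN'
    simp only [hd, Nat.sub_add_cancel hN] at this
    linarith
  · have : 0 ≤ d 0 := nonneg_of_mul_nonneg_right hfirst hN'
    simp only [hd, zero_add] at this
    linarith

theorem logConcave_seq_endpoints_le {p : ℕ → ℝ} {N : ℕ} (hN : 0 < N)
    (hpos : ∀ m ≤ N, 0 < p m) (hlc : ∀ m, m + 2 ≤ N → p m * p (m + 2) ≤ p (m + 1) ^ 2)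
    (heq : p 0 = p N) : p N ≤ p (N - 1) ∧ p 0 ≤ p 1 := by
  have hlog := concave_seq_endpoints_le (q := fun m => Real.log (p m)) hN
    (fun m hm => calc
      Real.log (p m) + Real.log (p (m + 2)) = Real.log (p m * p (m + 2)) :=
        (Real.log_mul (hpos m (by omega)).ne' (hpos (m + 2) hm).ne').symm
      _ ≤ Real.log (p (m + 1) ^ 2) :=
        Real.log_le_log (mul_pos (hpos m (by omega)) (hpos (m + 2) hm)) (hlc m hm)
      _ = 2 * Real.log (p (m + 1)) := by simp [Real.log_pow])
    (by rw [heq])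
  simp only [Real.log_le_log_iff (hpos _ le_rfl) (hpos _ (Nat.sub_le N 1)),
    Real.log_le_log_iff (hpos 0 (Nat.zero_le N)) (hpos 1 hN)] at hlog
  exact hlog

theorem choose_succ_div_choose {n m : ℕ} (hm : m < n) :
    (n.choose (m + 1) : ℝ) / n.choose m = ((n : ℝ) - m) / (m + 1) := by
  have hc : (n.choose m : ℝ) ≠ 0 := by exact_mod_cast (Nat.choose_pos hm.le).ne'
  rw [div_eq_div_iff hc (by positivity)]
  have := Nat.choose_succ_right_eq n m
  rw [← Nat.cast_inj (R := ℝ)] at this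
  push_cast [Nat.cast_sub hm.le] at this
  linear_combination this

theorem div_le_div_of_div_le_div {a b c d : ℝ} (hb : 0 < b) (hc : 0 < c) (hd : 0 < d)
    (h : a / c ≤ b / d) : a / b ≤ c / d := by
  rw [div_le_div_iff₀ hc hd] at h
  rw [div_le_div_iff₀ hb hd]
  linarith [mul_comm b c]

section Sv

variable {n : ℕ} (lam : Fin n → ℝ)

theorem Sv_zero : Sv 0 lam = 1 := by
  simp [Sv]

theorem Sv_eq_zero_of_lt {j : ℕ} (h : n < j) : Sv j lam = 0 := by
  rw [Sv, Finset.powersetCard_eq_empty.mpr (by simpa using h), Finset.sum_empty]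

theorem coeff_prod_X_add_C_eq_Sv {j : ℕ} (hj : j ≤ n) :
    (∏ i, (X + C (lam i))).coeff j = Sv (n - j) lam := by
  simpa [Sv] using Finset.prod_X_add_C_coeff Finset.univ lam (by simpa using hj)

noncomputable def Ev (j : ℕ) : ℝ := Sv j lam / n.choose j

theorem Ev_mul_Ev_le_sq {m : ℕ} (hm : m + 2 ≤ n) :
    Ev lam m * Ev lam (m + 2) ≤ Ev lam (m + 1) ^ 2 := by
  set p : ℝ[X] := ∏ i, (X + C (lam i))
  have hp : p.Splits := Splits.prod fun i _ => Splits.X_add_C _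
  have hdeg : p.natDegree ≤ n := (natDegree_prod_le _ _).trans (by simp)
  have hcoeff : ∀ j ≤ n, normalizedCoeff p n (n - j) = Ev lam j := by
    intro j hj
    rw [normalizedCoeff, coeff_prod_X_add_C_eq_Sv lam (Nat.sub_le n j), Nat.sub_sub_self hj,
      Nat.choose_symm hj, Ev]
  have h := hp.normalizedCoeff_mul_le_sq hdeg (j := n - (m + 2)) (by omega)
  rw [show n - (m + 2) + 1 = n - (m + 1) by omega, show n - (m + 2) + 2 = n - m by omega,
    hcoeff _ hm, hcoeff _ (by omega), hcoeff _ (by omega)] at h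
  linarith [mul_comm (Ev lam m) (Ev lam (m + 2))]

theorem Sv_succ_div_Sv_le_of_Ev_le {m : ℕ} (hm : m < n) (hS : 0 < Sv m lam)
    (h : Ev lam (m + 1) ≤ Ev lam m) :
    Sv (m + 1) lam / Sv m lam ≤ ((n : ℝ) - m) / (m + 1) := by
  rw [← choose_succ_div_choose hm]
  exact div_le_div_of_div_le_div hS (by exact_mod_cast Nat.choose_pos hm)
    (by exact_mod_cast Nat.choose_pos hm.le) h

theorem Sv_div_Sv_succ_le_of_Ev_le {m : ℕ} (hm : m < n) (hS : 0 < Sv (m + 1) lam)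
    (h : Ev lam m ≤ Ev lam (m + 1)) :
    Sv m lam / Sv (m + 1) lam ≤ ((m : ℝ) + 1) / (n - m) := by
  rw [← inv_div ((n : ℝ) - m), ← choose_succ_div_choose hm, inv_div]
  exact div_le_div_of_div_le_div hS (by exact_mod_cast Nat.choose_pos hm.le)
    (by exact_mod_cast Nat.choose_pos hm) h

end Sv

/-- Under `S_k/S_l = C(n,k)/C(n,l)` on the Garding cone:
`S_{k+1}/S_k ≤ (n−k)/(k+1)`, and for `l ≥ 1`, `S_{l−1}/S_l ≤ l/(n−l+1)`. -/
theorem stmt_6 {n : ℕ} (k l : ℕ) (lam : Fin n → ℝ)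
    (hGamma : ∀ i, 1 ≤ i → i ≤ k → 0 < Sv i lam)
    (hlk : l < k) (hkn : k ≤ n)
    (hquot : Sv k lam / Sv l lam = (n.choose k : ℝ) / (n.choose l : ℝ)) :
    Sv (k + 1) lam / Sv k lam ≤ ((n : ℝ) - (k : ℝ)) / ((k : ℝ) + 1)
    ∧ (1 ≤ l →
        Sv (l - 1) lam / Sv l lam ≤ (l : ℝ) / ((n : ℝ) - (l : ℝ) + 1)) := by
  have hS : ∀ i ≤ k, 0 < Sv i lam := fun i hi => by
    rcases Nat.eq_zero_or_pos i with rfl | hi0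
    · simp [Sv_zero]
    · exact hGamma i hi0 hi
  have hE : ∀ i ≤ k, 0 < Ev lam i := fun i hi =>
    div_pos (hS i hi) (by exact_mod_cast Nat.choose_pos (hi.trans hkn))
  have hEkl : Ev lam l = Ev lam k :=
    ((div_eq_div_iff_div_eq_div' (hS l hlk.le).ne' (by exact_mod_cast (Nat.choose_pos hkn).ne')).mp
      hquot).symm
  obtain ⟨hfall, hrise⟩ :=
    logConcave_seq_endpoints_le (p := fun m => Ev lam (l + m)) (N := k - l) (by omega)
      (fun m hm => hE _ (by omega))
      (fun m hm => by simpa [add_assoc] using Ev_mul_Ev_le_sq lam (m := l + m) (by omega))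
      (by simpa [Nat.add_sub_cancel' hlk.le] using hEkl)
  simp only [add_zero, Nat.add_sub_cancel' hlk.le, show l + (k - l - 1) = k - 1 by omega]
    at hfall hrise
  constructor
  · rcases hkn.lt_or_eq with hkn | rfl
    · have hN := Ev_mul_Ev_le_sq lam (m := k - 1) (by omega)
      rw [show k - 1 + 2 = k + 1 by omega, Nat.sub_add_cancel (by omega : 1 ≤ k)] at hN
      refine Sv_succ_div_Sv_le_of_Ev_le lam hkn (hS k le_rfl) ?_
      nlinarith [hE k le_rfl, hE (k - 1) (by omega)]
    · simp [Sv_eq_zero_of_lt lam (Nat.lt_succ_self _)]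
  · intro hl
    obtain ⟨m, rfl⟩ : ∃ m, l = m + 1 := ⟨l - 1, by omega⟩
    have hN := Ev_mul_Ev_le_sq lam (m := m) (by omega)
    have h := Sv_div_Sv_succ_le_of_Ev_le lam (by omega) (hS (m + 1) hlk.le)
      (by nlinarith [hE (m + 1) hlk.le, hE (m + 2) (by omega)])
    rw [Nat.add_sub_cancel]
    convert h using 2 <;> push_cast <;> ring
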